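/- Let F be a field of characteristic ≠ 2 and U ≠ 0 an n×n strictly lower triangular matrix over F. Then A(U) ≅ A(0_n) (via a degree-preserving isomorphism) if and only if one of the following holds: (1) u_{kj} = 0 for all 1 < j < k ≤ n; or (2) for every leader (k,j) of U with j > 1 one has 2u_{ki} + u_{kj} u_{ji} = 0 for all 1 ≤ i < j. -/

import Mathlib

open scoped BigOperators

noncomputable section

variable {F : Type} [Field F]

/-- `T` is strictly lower triangular. -/
def SLT {n : ℕ} (T : Matrix (Fin n) (Fin n) F) : Prop :=
  ∀ i j : Fin n, i ≤ j → T i j = 0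

/-- The ideal of relations defining the nil graded algebra `A(T)`:
`X i ^ 2 = ∑ j < i, T i j * X j * X i` (for `i = 0` the sum is empty, giving `X 0 ^ 2 = 0`). -/
def ntIdeal {n : ℕ} (T : Matrix (Fin n) (Fin n) F) : Ideal (MvPolynomial (Fin n) F) :=
  Ideal.span {p | ∃ i : Fin n,
    p = MvPolynomial.X i ^ 2 -
      ∑ j ∈ Finset.univ.filter (fun j => j < i),
        MvPolynomial.C (T i j) * MvPolynomial.X j * MvPolynomial.X i}

/-- The nil graded algebra `A(T)` associated to the strictly lower triangular matrix `T`. -/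
abbrev NTAlg {n : ℕ} (T : Matrix (Fin n) (Fin n) F) : Type :=
  MvPolynomial (Fin n) F ⧸ ntIdeal T

/-- The generator `X i` of `A(T)`. -/
def ntGen {n : ℕ} (T : Matrix (Fin n) (Fin n) F) (i : Fin n) : NTAlg T :=
  Ideal.Quotient.mk (ntIdeal T) (MvPolynomial.X i)

/-- There is a degree-preserving isomorphism `A(T) → A(S)`, i.e. an algebra isomorphism
sending each generator to an `F`-linear combination of the generators of the target. -/
def NTIso {n : ℕ} (T S : Matrix (Fin n) (Fin n) F) : Prop :=
  ∃ e : NTAlg T ≃ₐ[F] NTAlg S, ∃ Γ : Matrix (Fin n) (Fin n) F,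
    ∀ j : Fin n, e (ntGen T j) = ∑ i : Fin n, Γ i j • ntGen S i

/-- `(k, j)` is a leader of `U`: the last nonzero entry of row `k` is in column `j`. -/
def IsLeader {n : ℕ} (U : Matrix (Fin n) (Fin n) F) (k j : Fin n) : Prop :=
  U k j ≠ 0 ∧ ∀ c : Fin n, j < c → U k c = 0

/-!
Write `S k = ∑ l, u k l • Y l`, so that `Y k ^ 2 = S k * Y k` in `A(U)`. Completing the square,
`Z k = Y k - S k / 2` satisfies `Z k ^ 2 = S k ^ 2 / 4`. Condition (2) says that row `k` of `U` is
`u k j` times row `j` of `1 - U / 2` for the leader `(k, j)`, i.e. `S k = u k j • Z j`, so by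
induction on `k` every `Z k` squares to zero, and the unitriangular change of generators `Y ↦ Z`
is an isomorphism `A(0) ≅ A(U)`. Condition (1) is a degenerate case of (2).

Conversely, if `Y m ↦ ∑ i, γ i m • Y i` is an isomorphism, each image squares to zero.
Evaluating at `Y l ↦ 2 s`, `Y i ↦ t + u i l • s` in `F[s, t] / (s², t²)` gives
`γ i (2 γ l + γ i u i l) = 0` for `l < i`. For a leader `(k, j)` and a column with `γ k ≠ 0`,
the three pairs among `i < j < k` combine to `2 u k i + u k j u j i = 0`.
-/

open scoped Matrix

section MatrixAction

variable {ι : Type*} [Fintype ι] {A B : Type*} [CommRing A] [Algebra F A] [CommRing B]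
  [Algebra F B]

theorem AlgHom.map_mulVec_map (f : A →ₐ[F] B) (M : Matrix ι ι F) (v : ι → A) (i : ι) :
    f ((M.map (algebraMap F A) *ᵥ v) i) = (M.map (algebraMap F B) *ᵥ (f ∘ v)) i := by
  rw [← f.coe_toRingHom, RingHom.map_mulVec, Matrix.map_map]
  congr 3
  exact funext fun c => f.commutes c

theorem mulVec_map_mulVec_map_of_mul_eq_one [DecidableEq ι] {M N : Matrix ι ι F} (h : M * N = 1)
    (v : ι → A) : M.map (algebraMap F A) *ᵥ (N.map (algebraMap F A) *ᵥ v) = v := by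
  rw [Matrix.mulVec_mulVec, ← Matrix.map_mul, h, Matrix.map_one _ (map_zero _) (map_one _),
    Matrix.one_mulVec]

end MatrixAction

section Presentation

variable {n : ℕ} {A : Type*} [CommRing A] [Algebra F A]

theorem SLT.zero : SLT (0 : Matrix (Fin n) (Fin n) F) := fun _ _ _ => rfl

theorem SLT.lt_of_ne_zero {T : Matrix (Fin n) (Fin n) F} (hT : SLT T) {k j : Fin n}
    (h : T k j ≠ 0) : j < k :=
  lt_of_not_ge fun hkj => h (hT k j hkj)

/-- The relations of `A(T)` with the full row of `T` in place of the sum over `j < i`; the two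
agree when `T` is strictly lower triangular. -/
def SatisfiesNTRelations (T : Matrix (Fin n) (Fin n) F) (v : Fin n → A) : Prop :=
  ∀ i, v i ^ 2 = (T.map (algebraMap F A) *ᵥ v) i * v i

theorem SLT.sum_filter_lt {T : Matrix (Fin n) (Fin n) F} (hT : SLT T) (v : Fin n → A)
    (i : Fin n) :
    ∑ j ∈ Finset.univ.filter (fun j => j < i), algebraMap F A (T i j) * v j * v i
      = (T.map (algebraMap F A) *ᵥ v) i * v i := by
  rw [Matrix.mulVec, dotProduct, Finset.sum_mul]
  refine Finset.sum_subset (Finset.filter_subset _ _) fun j _ hj => ?_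
  simp [hT i j (not_lt.mp fun hji => hj (by simpa using hji))]

theorem satisfiesNTRelations_zero_iff (v : Fin n → A) :
    SatisfiesNTRelations (0 : Matrix (Fin n) (Fin n) F) v ↔ ∀ i, v i ^ 2 = 0 := by
  simp [SatisfiesNTRelations]

variable {T : Matrix (Fin n) (Fin n) F}

theorem satisfiesNTRelations_ntGen (hT : SLT T) : SatisfiesNTRelations T (ntGen T) := by
  intro i
  have hrel :=
    (Ideal.Quotient.eq_zero_iff_mem (I := ntIdeal T)).mpr (Ideal.subset_span ⟨i, rfl⟩)
  rw [← hT.sum_filter_lt, ← sub_eq_zero]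
  rwa [map_sub, map_pow, map_sum] at hrel

def ntLift (hT : SLT T) (v : Fin n → A) (hv : SatisfiesNTRelations T v) : NTAlg T →ₐ[F] A :=
  Ideal.Quotient.liftₐ _ (MvPolynomial.aeval v) fun _ hp => by
    refine (Ideal.span_le (I := RingHom.ker (MvPolynomial.aeval v))).mpr ?_ hp
    rintro _ ⟨i, rfl⟩
    simp [MvPolynomial.aeval_X, hT.sum_filter_lt, hv i]

@[simp]
theorem ntLift_ntGen (hT : SLT T) (v : Fin n → A) (hv : SatisfiesNTRelations T v) (i : Fin n) :
    ntLift hT v hv (ntGen T i) = v i :=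
  MvPolynomial.aeval_X v i

theorem ntAlgHom_ext {f g : NTAlg T →ₐ[F] A} (h : ∀ i, f (ntGen T i) = g (ntGen T i)) :
    f = g :=
  Ideal.Quotient.algHom_ext F (MvPolynomial.algHom_ext h)

end Presentation

section SquareCompletion

variable {n : ℕ} {A : Type*} [CommRing A] [Algebra F A] {U : Matrix (Fin n) (Fin n) F}

/-- Condition (2) of the theorem. -/
def LeaderCondition (U : Matrix (Fin n) (Fin n) F) : Prop :=
  ∀ k j : Fin n, IsLeader U k j → 0 < j.val →
    ∀ i : Fin n, i < j → 2 * U k i + U k j * U j i = 0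

/-- The substitution `Y k ↦ Y k - ½ ∑ l, u k l • Y l` completes the square
`Y k ^ 2 - (∑ l, u k l • Y l) * Y k`. -/
def squareCompletion (U : Matrix (Fin n) (Fin n) F) : Matrix (Fin n) (Fin n) F :=
  1 - (2 : F)⁻¹ • U

theorem det_squareCompletion (hU : SLT U) : (squareCompletion U).det = 1 := by
  have hlower : (squareCompletion U).BlockTriangular OrderDual.toDual := fun i j hij => by
    simp [squareCompletion, (show i < j from hij).ne, hU i j (le_of_lt hij)]
  rw [Matrix.det_of_isLowerTriangular _ hlower]
  simp [squareCompletion, hU _ _ le_rfl]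

theorem squareCompletion_mulVec_apply (v : Fin n → A) (k : Fin n) :
    ((squareCompletion U).map (algebraMap F A) *ᵥ v) k
      = v k - algebraMap F A (2 : F)⁻¹ * (U.map (algebraMap F A) *ᵥ v) k := by
  simp [squareCompletion, Matrix.mulVec, dotProduct, sub_mul, Finset.sum_sub_distrib,
    Finset.mul_sum, mul_assoc, Matrix.one_apply]

theorem sq_squareCompletion_mulVec_apply (h2 : (2 : F) ≠ 0) (v : Fin n → A) (k : Fin n) :
    ((squareCompletion U).map (algebraMap F A) *ᵥ v) k ^ 2
      = (v k ^ 2 - (U.map (algebraMap F A) *ᵥ v) k * v k)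
        + algebraMap F A (2 : F)⁻¹ ^ 2 * (U.map (algebraMap F A) *ᵥ v) k ^ 2 := by
  have hhalf : 2 * algebraMap F A (2 : F)⁻¹ = 1 := by
    rw [← map_ofNat (algebraMap F A) 2, ← map_mul, mul_inv_cancel₀ h2, map_one]
  rw [squareCompletion_mulVec_apply]
  linear_combination (-(U.map (algebraMap F A) *ᵥ v) k * v k) * hhalf

theorem exists_isLeader {k : Fin n} (h : ∃ l, U k l ≠ 0) : ∃ j, IsLeader U k j := by
  classical
  obtain ⟨j, hj, hmax⟩ := (Finset.univ.filter fun l => U k l ≠ 0).exists_max_image id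
    (by simpa [Finset.filter_nonempty_iff] using h)
  refine ⟨j, (Finset.mem_filter.mp hj).2, fun c hjc => ?_⟩
  by_contra hc
  exact (hmax c (by simpa using hc)).not_gt hjc

theorem IsLeader.row_eq (h2 : (2 : F) ≠ 0) (hU : SLT U) (hC : LeaderCondition U) {k j : Fin n}
    (hl : IsLeader U k j) (l : Fin n) : U k l = U k j * squareCompletion U j l := by
  rcases lt_trichotomy l j with hlj | rfl | hjl
  · have hcond := hC k j hl (Nat.zero_lt_of_lt hlj) l hlj
    simp only [squareCompletion, Matrix.sub_apply, Matrix.one_apply_ne hlj.ne',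
      Matrix.smul_apply, smul_eq_mul]
    linear_combination (2 : F)⁻¹ * hcond - U k l * mul_inv_cancel₀ h2
  · simp [squareCompletion, hU l l le_rfl]
  · simp [squareCompletion, Matrix.one_apply_ne hjl.ne, hl.2 l hjl, hU j l hjl.le]

end SquareCompletion

section Forward

variable {n : ℕ} {A : Type*} [CommRing A] [Algebra F A] {U : Matrix (Fin n) (Fin n) F}

theorem LeaderCondition.mulVec_apply_eq_zero_or_exists (h2 : (2 : F) ≠ 0) (hU : SLT U)
    (hC : LeaderCondition U) (v : Fin n → A) (k : Fin n) :
    (U.map (algebraMap F A) *ᵥ v) k = 0 ∨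
      ∃ j < k, (U.map (algebraMap F A) *ᵥ v) k
        = algebraMap F A (U k j) * ((squareCompletion U).map (algebraMap F A) *ᵥ v) j := by
  by_cases hrow : ∀ l, U k l = 0
  · left
    simp [Matrix.mulVec, dotProduct, hrow]
  obtain ⟨j, hl⟩ := exists_isLeader (not_forall.mp hrow)
  refine Or.inr ⟨j, hU.lt_of_ne_zero hl.1, ?_⟩
  simp only [Matrix.mulVec, dotProduct, Matrix.map_apply, Finset.mul_sum]
  refine Finset.sum_congr rfl fun l _ => ?_
  rw [hl.row_eq h2 hU hC l, map_mul, mul_assoc]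

theorem LeaderCondition.sq_mulVec_apply_eq_zero (h2 : (2 : F) ≠ 0) (hU : SLT U)
    (hC : LeaderCondition U) (v : Fin n → A) (k : Fin n)
    (h : ∀ j < k, ((squareCompletion U).map (algebraMap F A) *ᵥ v) j ^ 2 = 0) :
    (U.map (algebraMap F A) *ᵥ v) k ^ 2 = 0 := by
  rcases hC.mulVec_apply_eq_zero_or_exists h2 hU v k with h0 | ⟨j, hjk, hj⟩
  · rw [h0, sq, zero_mul]
  · rw [hj, mul_pow, h j hjk, mul_zero]

theorem LeaderCondition.satisfiesNTRelations_iff (h2 : (2 : F) ≠ 0) (hU : SLT U)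
    (hC : LeaderCondition U) (v : Fin n → A) :
    SatisfiesNTRelations U v ↔
      ∀ k, ((squareCompletion U).map (algebraMap F A) *ᵥ v) k ^ 2 = 0 := by
  constructor
  · intro hv k
    induction k using WellFoundedLT.induction with
    | ind k ih =>
      rw [sq_squareCompletion_mulVec_apply h2, sub_eq_zero.mpr (hv k),
        hC.sq_mulVec_apply_eq_zero h2 hU v k ih, mul_zero, add_zero]
  · intro hz k
    have hsq := sq_squareCompletion_mulVec_apply h2 v k (U := U)
    rw [hz k, hC.sq_mulVec_apply_eq_zero h2 hU v k fun j _ => hz j] at hsq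
    linear_combination -hsq

theorem ntIso_of_leaderCondition (h2 : (2 : F) ≠ 0) (hU : SLT U) (hC : LeaderCondition U) :
    NTIso (0 : Matrix (Fin n) (Fin n) F) U := by
  set M := squareCompletion U
  have hM : IsUnit M.det := by rw [det_squareCompletion hU]; exact isUnit_one
  let φ := ntLift (SLT.zero (F := F)) (M.map (algebraMap F (NTAlg U)) *ᵥ ntGen U)
    ((satisfiesNTRelations_zero_iff _).mpr
      ((hC.satisfiesNTRelations_iff h2 hU _).mp (satisfiesNTRelations_ntGen hU)))
  let ψ := ntLift hU (M⁻¹.map (algebraMap F (NTAlg (0 : Matrix (Fin n) (Fin n) F))) *ᵥ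
      ntGen 0)
    ((hC.satisfiesNTRelations_iff h2 hU _).mpr (by
      rw [mulVec_map_mulVec_map_of_mul_eq_one (M.mul_nonsing_inv hM)]
      exact (satisfiesNTRelations_zero_iff _).mp (satisfiesNTRelations_ntGen (SLT.zero (F := F)))))
  have hφ : ⇑φ ∘ ntGen 0 = M.map (algebraMap F (NTAlg U)) *ᵥ ntGen U :=
    funext (ntLift_ntGen _ _ _)
  have hψ : ⇑ψ ∘ ntGen U = M⁻¹.map (algebraMap F _) *ᵥ ntGen 0 :=
    funext (ntLift_ntGen _ _ _)
  refine ⟨AlgEquiv.ofAlgHom φ ψ (ntAlgHom_ext fun i => ?_) (ntAlgHom_ext fun i => ?_), Mᵀ,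
    fun j => ?_⟩
  · rw [AlgHom.comp_apply, ← Function.comp_apply (f := ψ), hψ, AlgHom.map_mulVec_map, hφ,
      mulVec_map_mulVec_map_of_mul_eq_one (M.nonsing_inv_mul hM), AlgHom.id_apply]
  · rw [AlgHom.comp_apply, ← Function.comp_apply (f := φ), hφ, AlgHom.map_mulVec_map, hψ,
      mulVec_map_mulVec_map_of_mul_eq_one (M.mul_nonsing_inv hM), AlgHom.id_apply]
  · rw [AlgEquiv.ofAlgHom_apply, ← Function.comp_apply (f := φ), hφ]
    simp [Matrix.mulVec, dotProduct, ← Algebra.smul_def]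

end Forward

section Reverse

open DualNumber TrivSqZeroExt

theorem DualNumber.inl_eps_mul_inl_eps {R : Type*} [CommRing R] :
    (inl ε : DualNumber (DualNumber R)) * inl ε = 0 := by
  rw [← inl_mul, eps_mul_eps, inl_zero]

theorem DualNumber.eq_zero_of_algebraMap_mul_inl_eps_mul_eps {R : Type*} [CommRing R] {c : R}
    (h : algebraMap R (DualNumber (DualNumber R)) c * (inl ε * ε) = 0) : c = 0 := by
  simpa [algebraMap_eq_inl'] using congrArg (fun x => snd (snd x)) h

variable {n : ℕ} {U : Matrix (Fin n) (Fin n) F}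

theorem satisfiesNTRelations_single_eps (hU : SLT U) (k : Fin n) :
    SatisfiesNTRelations U (Pi.single k (ε : DualNumber F)) := by
  intro m
  by_cases hm : m = k
  · subst hm
    simp [hU m m le_rfl, sq]
  · simp [hm]

/-- `DualNumber (DualNumber F)` is `F[s, t] / (s², t²)` with `s = inl ε` and `t = ε`. -/
theorem satisfiesNTRelations_pair (hU : SLT U) {l i : Fin n} (hli : l < i) :
    SatisfiesNTRelations U
      (Pi.single l (2 * inl ε) + Pi.single i (ε + algebraMap F _ (U i l) * inl ε) :
        Fin n → DualNumber (DualNumber F)) := by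
  have hss := DualNumber.inl_eps_mul_inl_eps (R := F)
  have htt := eps_mul_eps (R := DualNumber F)
  intro m
  rcases eq_or_ne m l with rfl | hml
  · have hrel : (2 * inl ε : DualNumber (DualNumber F)) ^ 2 = 0 := by
      linear_combination 4 * hss
    simpa [Matrix.mulVec_add, Pi.single_apply, hli.ne, hU m m le_rfl, hU m i hli.le] using hrel
  rcases eq_or_ne m i with rfl | hmi
  · set u := algebraMap F (DualNumber (DualNumber F)) (U m l)
    have hrel : (ε + u * inl ε) ^ 2 = u * (2 * inl ε) * (ε + u * inl ε) := by
      linear_combination htt - u ^ 2 * hss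
    simpa [Matrix.mulVec_add, Pi.single_apply, hli.ne', hU m m le_rfl] using hrel
  · simp [hml, hmi]

theorem coeff_mul_eq_zero_of_sq_eq_zero (h2 : (2 : F) ≠ 0) (hU : SLT U) (a : Fin n → F)
    (ha : (∑ m, a m • ntGen U m) ^ 2 = 0) {l i : Fin n} (hli : l < i) :
    a i * (2 * a l + a i * U i l) = 0 := by
  have hss := DualNumber.inl_eps_mul_inl_eps (R := F)
  have htt := eps_mul_eps (R := DualNumber F)
  rw [Finset.sum_congr rfl fun m _ => Algebra.smul_def (a m) (ntGen U m)] at ha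
  have hχ := congrArg (ntLift hU _ (satisfiesNTRelations_pair hU hli)) ha
  simp only [map_pow, map_sum, map_mul, AlgHom.commutes, ntLift_ntGen, map_zero, Pi.add_apply,
    Pi.single_apply, mul_add, mul_ite, mul_zero, Finset.sum_add_distrib, Finset.sum_ite_eq',
    Finset.mem_univ, if_true] at hχ
  -- the image of `∑ m, a m • Y m` is `α s + a i t`, whose square is `2 α (a i) s t`
  set α := algebraMap F (DualNumber (DualNumber F)) (a l) * 2
    + algebraMap F _ (a i) * algebraMap F _ (U i l)
  have hcoeff : algebraMap F (DualNumber (DualNumber F)) (2 * (a i * (2 * a l + a i * U i l)))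
      * (inl ε * ε) = 0 := by
    simp only [map_mul, map_add, map_ofNat]
    linear_combination hχ - α ^ 2 * hss - algebraMap F _ (a i) ^ 2 * htt
  exact (mul_eq_zero.mp
    (DualNumber.eq_zero_of_algebraMap_mul_inl_eps_mul_eps hcoeff)).resolve_left h2

/-- Otherwise the character `Y k ↦ ε` (other generators `↦ 0`) of `A(U)` would kill every
`e (Y m)`, hence take values in `F` on all of `A(U)`. -/
theorem exists_coeff_ne_zero_of_algEquiv (hU : SLT U)
    (e : NTAlg (0 : Matrix (Fin n) (Fin n) F) ≃ₐ[F] NTAlg U) (Γ : Matrix (Fin n) (Fin n) F)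
    (hΓ : ∀ j, e (ntGen 0 j) = ∑ i, Γ i j • ntGen U i) (k : Fin n) :
    ∃ m, Γ k m ≠ 0 := by
  by_contra! hrow
  let χ := ntLift hU _ (satisfiesNTRelations_single_eps hU k)
  let aug := ntLift (SLT.zero (F := F)) (0 : Fin n → F) (by simp [satisfiesNTRelations_zero_iff])
  have hcomp : χ.comp e.toAlgHom = (Algebra.ofId F _).comp aug := ntAlgHom_ext fun m => by
    simp [χ, aug, hΓ, map_sum, Pi.single_apply, hrow]
  have := congrArg snd (AlgHom.congr_fun hcomp (e.symm (ntGen U k)))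
  simp [χ, algebraMap_eq_inl] at this

theorem leaderCondition_of_ntIso (h2 : (2 : F) ≠ 0) (hU : SLT U)
    (h : NTIso (0 : Matrix (Fin n) (Fin n) F) U) : LeaderCondition U := by
  obtain ⟨e, Γ, hΓ⟩ := h
  intro k j hl _ i hij
  obtain ⟨m, hkm⟩ := exists_coeff_ne_zero_of_algEquiv hU e Γ hΓ k
  have hsq : (∑ i, Γ i m • ntGen U i) ^ 2 = 0 := by
    rw [← hΓ m, ← map_pow, (satisfiesNTRelations_ntGen (SLT.zero (F := F))) m]
    simp
  have hjk := hU.lt_of_ne_zero hl.1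
  have coeff {p q : Fin n} (hpq : p < q) (hq : Γ q m ≠ 0) : 2 * Γ p m + Γ q m * U q p = 0 :=
    (mul_eq_zero.mp (coeff_mul_eq_zero_of_sq_eq_zero h2 hU _ hsq hpq)).resolve_left hq
  have ejk := coeff hjk hkm
  have eik := coeff (hij.trans hjk) hkm
  have hjm : Γ j m ≠ 0 := fun h0 => hl.1 (by simpa [h0, hkm] using ejk)
  have eij := coeff hij hjm
  have hfin : Γ k m * (2 * U k i + U k j * U j i) = 0 := by
    linear_combination 2 * eik - 2 * eij + U j i * ejk
  exact (mul_eq_zero.mp hfin).resolve_left hkm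

end Reverse

theorem leaderCondition_of_eq_zero {n : ℕ} {U : Matrix (Fin n) (Fin n) F} (hU : SLT U)
    (h : ∀ j k : Fin n, 0 < j.val → j < k → U k j = 0) : LeaderCondition U :=
  fun k j hl hj _ _ => absurd (h j k hj (hU.lt_of_ne_zero hl.1)) hl.1

theorem stmt14_general {n : ℕ} (h2 : (2 : F) ≠ 0) (U : Matrix (Fin n) (Fin n) F) (hU : SLT U) :
    NTIso (0 : Matrix (Fin n) (Fin n) F) U ↔
      ((∀ j k : Fin n, 0 < j.val → j < k → U k j = 0) ∨
       (∀ k j : Fin n, IsLeader U k j → 0 < j.val →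
          ∀ i : Fin n, i < j → 2 * U k i + U k j * U j i = 0)) := by
  refine ⟨fun h => Or.inr (leaderCondition_of_ntIso h2 hU h), fun h => ?_⟩
  exact ntIso_of_leaderCondition h2 hU (h.elim (leaderCondition_of_eq_zero hU) id)

/-- `A(0ₙ) ≅ A(U)` (degree-preservingly) iff either `u_{kj} = 0` for all `1 < j < k`, or
for every leader `(k,j)` with `j > 1` one has `2u_{ki} + u_{kj}u_{ji} = 0` for all `i < j`. -/
theorem stmt14 {n : ℕ} (h2 : (2 : F) ≠ 0) (U : Matrix (Fin n) (Fin n) F) (hU : SLT U)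
    (hne : U ≠ 0) :
    NTIso (0 : Matrix (Fin n) (Fin n) F) U ↔
      ((∀ j k : Fin n, 0 < j.val → j < k → U k j = 0) ∨
       (∀ k j : Fin n, IsLeader U k j → 0 < j.val →
          ∀ i : Fin n, i < j → 2 * U k i + U k j * U j i = 0)) :=
  stmt14_general h2 U hU
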